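/- For all commuting n-qubit Pauli matrices P₁ and P₂, the matrix G_{P₁P₂} = ((3+i)/4) I + ((1−i)/4)(P₁ + P₂ − P₁P₂) is unitary. -/

import Mathlib

open Matrix Complex

/-- Length-`n` vectors over `𝔽₂`, indexing computational basis states of `n` qubits. -/
abbrev QVec (n : ℕ) := Fin n → ZMod 2

/-- Integer (here: natural number) dot product of two 0/1 vectors. -/
def dotN {n : ℕ} (a b : QVec n) : ℕ := ∑ i, (a i).val * (b i).val

/-- The `n`-qubit Pauli matrix `P_{a,b}`. -/
noncomputable def Pauli {n : ℕ} (a b : QVec n) : Matrix (QVec n) (QVec n) ℂ :=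
  fun x y => if x = y + a then Complex.I ^ dotN a b * (-1 : ℂ) ^ dotN b y else 0

lemma qvec_add_self {n : ℕ} (x : QVec n) : x + x = 0 := by
  funext i; exact CharTwo.add_self_eq_zero _

lemma qvec_add_add {n : ℕ} (x a : QVec n) : x + a + a = x := by
  rw [add_assoc, qvec_add_self, add_zero]

lemma dotN_comm {n : ℕ} (a b : QVec n) : dotN a b = dotN b a := by
  simp [dotN, mul_comm]

lemma zmod_pow_aux : ∀ u v w : ZMod 2, ((-1 : ℂ)) ^ (u.val * (v + w).val)
    = (-1 : ℂ) ^ (u.val * v.val) * (-1 : ℂ) ^ (u.val * w.val) := by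
  intro u v w
  fin_cases u <;> fin_cases v <;> fin_cases w <;>
    norm_num [show (1+1 : ZMod 2) = 0 from rfl, ZMod.val] <;> erw [Fin.val_add] <;> norm_num

lemma neg_one_pow_dotN_add {n : ℕ} (b x y : QVec n) :
    ((-1 : ℂ)) ^ dotN b (x + y) = (-1 : ℂ) ^ dotN b x * (-1 : ℂ) ^ dotN b y := by
  simp only [dotN, ← Finset.prod_pow_eq_pow_sum, ← Finset.prod_mul_distrib]
  exact Finset.prod_congr rfl fun i _ => zmod_pow_aux (b i) (x i) (y i)

lemma neg_one_pow_sq (k : ℕ) : ((-1 : ℂ)) ^ k * (-1 : ℂ) ^ k = 1 := by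
  rw [← pow_add, Even.neg_one_pow ⟨k, rfl⟩]

lemma Pauli_mul_self {n : ℕ} (a b : QVec n) : Pauli a b * Pauli a b = 1 := by
  ext x z
  rw [Matrix.mul_apply, Matrix.one_apply]
  rw [Finset.sum_eq_single (x + a)]
  · simp only [Pauli]
    rw [if_pos (qvec_add_add x a).symm]
    by_cases h : x = z
    · subst h
      rw [if_pos rfl, if_pos rfl, neg_one_pow_dotN_add b x a, dotN_comm b a]
      have hI : Complex.I ^ dotN a b * Complex.I ^ dotN a b * (-1 : ℂ) ^ dotN a b = 1 := by
        rw [← pow_add, ← two_mul, pow_mul, Complex.I_sq, neg_one_pow_sq]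
      calc Complex.I ^ dotN a b * ((-1:ℂ) ^ dotN b x * (-1:ℂ) ^ dotN a b) *
            (Complex.I ^ dotN a b * (-1:ℂ) ^ dotN b x)
          = (Complex.I ^ dotN a b * Complex.I ^ dotN a b * (-1:ℂ) ^ dotN a b) *
            ((-1:ℂ) ^ dotN b x * (-1:ℂ) ^ dotN b x) := by ring
        _ = 1 := by rw [hI, neg_one_pow_sq, one_mul]
    · rw [if_neg h, if_neg fun hxz => h (by
        have := congrArg (· + a) hxz
        simpa [qvec_add_add] using this), mul_zero]
  · intro y _ hy
    simp only [Pauli]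
    rw [if_neg fun h => hy (by rw [h, qvec_add_add]), zero_mul]
  · intro h
    exact absurd (Finset.mem_univ _) h

lemma Pauli_conjTranspose {n : ℕ} (a b : QVec n) : (Pauli a b)ᴴ = Pauli a b := by
  ext x y
  simp only [Matrix.conjTranspose_apply, Pauli]
  by_cases h : x = y + a
  · rw [if_pos (by rw [h, qvec_add_add]), if_pos h, h]
    rw [star_mul', star_pow, star_pow]
    rw [show star Complex.I = -Complex.I from Complex.conj_I]
    rw [show star (-1 : ℂ) = (-1 : ℂ) from by norm_num]
    rw [neg_one_pow_dotN_add b y a, dotN_comm b a, neg_pow Complex.I]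
    linear_combination (Complex.I ^ dotN a b * (-1:ℂ) ^ dotN b y) * neg_one_pow_sq (dotN a b)
  · rw [if_neg h, if_neg fun hy => h (by rw [hy, qvec_add_add]), star_zero]

/-- A `2^n × 2^n` unitary is Clifford if it maps every Pauli matrix to a
Pauli matrix up to a sign `±1`, under conjugation. -/
def IsClifford {n : ℕ} (C : Matrix (QVec n) (QVec n) ℂ) : Prop :=
  C ∈ Matrix.unitaryGroup (QVec n) ℂ ∧
    ∀ a b : QVec n, ∃ a' b' : QVec n, ∃ ε : ℂ, (ε = 1 ∨ ε = -1) ∧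
      C * Pauli a b * Cᴴ = ε • Pauli a' b'

/-- The channel representation `Û` of a `2^n × 2^n` matrix `U`:
rows/columns indexed by Pauli matrices, `Û_{rs} = (1/2^n) Tr(P_r U P_s U†)`. -/
noncomputable def chan {n : ℕ} (U : Matrix (QVec n) (QVec n) ℂ) :
    Matrix (QVec n × QVec n) (QVec n × QVec n) ℂ :=
  fun r s => ((1 : ℂ) / 2 ^ n) * Matrix.trace (Pauli r.1 r.2 * U * Pauli s.1 s.2 * Uᴴ)

/-- The gate `CS ⊗ I_{2^{n-2}}`, where `CS = diag(1,1,1,i)` acts on the first two qubits. -/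
noncomputable def CSgate (n : ℕ) : Matrix (QVec n) (QVec n) ℂ :=
  Matrix.diagonal fun x =>
    if h : 1 < n then
      (if x ⟨0, Nat.lt_of_lt_of_le Nat.zero_lt_one h.le⟩ = 1 ∧ x ⟨1, h⟩ = 1 then Complex.I else 1)
    else 1

/-- The Clifford+CS group `𝒥ₙ^{CS}`: the subgroup of the unitary group generated by the
Clifford unitaries together with `CS ⊗ I_{2^{n-2}}`. -/
noncomputable def CliffordCSGroup (n : ℕ) : Subgroup (Matrix.unitaryGroup (QVec n) ℂ) :=
  Subgroup.closure
    {u | IsClifford (u : Matrix (QVec n) (QVec n) ℂ) ∨ (u : Matrix (QVec n) (QVec n) ℂ) = CSgate n}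

/-- `G_{P₁P₂} = ((3+i)/4) I + ((1−i)/4)(P₁ + P₂ − P₁P₂)`. -/
noncomputable def Ggate {n : ℕ} (P₁ P₂ : Matrix (QVec n) (QVec n) ℂ) :
    Matrix (QVec n) (QVec n) ℂ :=
  ((3 + Complex.I) / 4) • (1 : Matrix (QVec n) (QVec n) ℂ) +
    ((1 - Complex.I) / 4) • (P₁ + P₂ - P₁ * P₂)

/-- For commuting Pauli matrices `P₁`, `P₂`, the matrix `G_{P₁P₂}` is unitary. -/
theorem Ggate_unitary (n : ℕ) (a₁ b₁ a₂ b₂ : QVec n)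
    (hc : Commute (Pauli a₁ b₁) (Pauli a₂ b₂)) :
    Ggate (Pauli a₁ b₁) (Pauli a₂ b₂) ∈ Matrix.unitaryGroup (QVec n) ℂ := by
  set P₁ := Pauli a₁ b₁ with hP₁
  set P₂ := Pauli a₂ b₂ with hP₂
  have h1 : P₁ * P₁ = 1 := Pauli_mul_self a₁ b₁
  have h2 : P₂ * P₂ = 1 := Pauli_mul_self a₂ b₂
  have hH1 : P₁ᴴ = P₁ := Pauli_conjTranspose a₁ b₁
  have hH2 : P₂ᴴ = P₂ := Pauli_conjTranspose a₂ b₂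
  have h21 : P₂ * P₁ = P₁ * P₂ := hc.symm.eq
  set S : Matrix (QVec n) (QVec n) ℂ := P₁ + P₂ - P₁ * P₂ with hS
  have e1 : P₁ * P₂ * P₁ = P₂ := by rw [mul_assoc, h21, ← mul_assoc, h1, one_mul]
  have e2 : P₁ * P₂ * P₂ = P₁ := by rw [mul_assoc, h2, mul_one]
  have e3 : P₁ * (P₁ * P₂) = P₂ := by rw [← mul_assoc, h1, one_mul]
  have e4 : P₂ * (P₁ * P₂) = P₁ := by rw [← mul_assoc, h21, mul_assoc, h2, mul_one]
  have e5 : P₁ * P₂ * (P₁ * P₂) = 1 := by rw [← mul_assoc, e1, h2]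
  have hS2 : S * S = (3 : ℂ) • (1 : Matrix (QVec n) (QVec n) ℂ) - (2 : ℂ) • S := by
    rw [hS]
    simp only [sub_mul, mul_sub, add_mul, mul_add, h1, h2, h21, e1, e2, e3, e4, e5]
    module
  have hSH : Sᴴ = S := by
    rw [hS]
    simp only [conjTranspose_sub, conjTranspose_add, conjTranspose_mul, hH1, hH2, h21]
  rw [Matrix.mem_unitaryGroup_iff]
  have hstar : star (Ggate P₁ P₂) =
      ((3 - Complex.I) / 4) • (1 : Matrix (QVec n) (QVec n) ℂ) +
        ((1 + Complex.I) / 4) • S := by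
    rw [Ggate, ← hS, Matrix.star_eq_conjTranspose]
    rw [conjTranspose_add, conjTranspose_smul, conjTranspose_smul, conjTranspose_one, hSH]
    congr 1
    · congr 1
      simp [Complex.ext_iff]
    · congr 1
      simp [Complex.ext_iff]
  rw [hstar, Ggate, ← hS]
  have expand : (((3 + Complex.I) / 4) • (1 : Matrix (QVec n) (QVec n) ℂ) +
        ((1 - Complex.I) / 4) • S) *
      (((3 - Complex.I) / 4) • (1 : Matrix (QVec n) (QVec n) ℂ) +
        ((1 + Complex.I) / 4) • S) =
      (((3 + Complex.I) / 4) * ((3 - Complex.I) / 4)) • (1 : Matrix (QVec n) (QVec n) ℂ) +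
        (((3 + Complex.I) / 4) * ((1 + Complex.I) / 4) +
          ((1 - Complex.I) / 4) * ((3 - Complex.I) / 4)) • S +
        (((1 - Complex.I) / 4) * ((1 + Complex.I) / 4)) • (S * S) := by
    simp only [add_mul, mul_add, smul_mul_assoc, mul_smul_comm, smul_smul, one_mul, mul_one]
    module
  rw [expand, hS2]
  match_scalars <;>
    first
      | linear_combination ((1:ℂ)/4) * Complex.I_sq
      | linear_combination (-(1:ℂ)/4) * Complex.I_sq
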